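/- arXiv:2601.20897 — 2 statements merged into one kernel-verified Lean document; each statement's English description precedes it below -/
import Mathlib

section
/- For every integer a ≥ 3 and every integer ν, ρ(ν; 2^a) = 2^{a+1} if ν ≡ 2 (mod 8) and ρ(ν; 2^a) = 0 otherwise. -/
/-- ρ(ν;q) := #{(u,v) ∈ (ℤ/qℤ)² : uv is a unit and u²+v² ≡ ν (mod q)}. -/
noncomputable def rho (ν : ℤ) (q : ℕ) : ℕ :=
  Nat.card {uv : ZMod q × ZMod q // IsUnit (uv.1 * uv.2) ∧ uv.1 ^ 2 + uv.2 ^ 2 = (ν : ZMod q)}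

/-!
Reduction mod `2^a` maps the solutions mod `2^(a+1)` with `u² + v² ≡ ν (mod 2^a)` four-to-one
onto the solutions mod `2^a`, and these split into the solutions with `u² + v² = ν` and with
`u² + v² = ν + 2^a`. For `a ≥ 3` the shift `u ↦ u + 2^(a-1)` matches the two kinds, because
`(u + 2^(a-1))² = u² + 2^a` for odd `u`. Hence `ρ(ν; 2^(a+1)) = 2 ρ(ν; 2^a)`, and the case
`a = 3` is a finite computation: odd squares are `1` mod `8`.
-/

open Function

theorem AddMonoidHom.card_preimage_of_surjective {G H : Type*} [AddGroup G] [AddGroup H]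
    (f : G →+ H) (hf : Surjective f) (S : Set H) :
    Nat.card (f ⁻¹' S) = Nat.card f.ker * Nat.card S := by
  let e := QuotientAddGroup.quotientKerEquivOfSurjective f hf
  have hS : f ⁻¹' S = QuotientAddGroup.mk ⁻¹' (e ⁻¹' S) := rfl
  rw [hS, Nat.card_congr (QuotientAddGroup.preimageMkEquivAddSubgroupProdSet _ _), Nat.card_prod,
    Nat.card_preimage_of_injective e.injective (by simp [e.surjective.range_eq])]

theorem AddMonoidHom.card_eq_card_ker_mul_of_surjective {G H : Type*} [AddGroup G] [AddGroup H]
    (f : G →+ H) (hf : Surjective f) :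
    Nat.card G = Nat.card f.ker * Nat.card H := by
  simpa using f.card_preimage_of_surjective hf Set.univ

namespace ZMod

theorem two_pow_self_eq_zero (k : ℕ) : (2 : ZMod (2 ^ k)) ^ k = 0 := by
  exact_mod_cast natCast_self (2 ^ k)

theorem two_pow_ne_zero (k : ℕ) : (2 : ZMod (2 ^ (k + 1))) ^ k ≠ 0 := by
  have h : ¬ 2 ^ (k + 1) ∣ 2 ^ k := by
    rw [Nat.pow_dvd_pow_iff_le_right one_lt_two]; omega
  exact_mod_cast (natCast_eq_zero_iff (2 ^ k) (2 ^ (k + 1))).not.mpr h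

theorem isUnit_natCast_two_pow_iff_odd {k : ℕ} (hk : k ≠ 0) (n : ℕ) :
    IsUnit (n : ZMod (2 ^ k)) ↔ Odd n := by
  rw [isUnit_iff_coprime, Nat.coprime_pow_right_iff (Nat.pos_of_ne_zero hk), Nat.coprime_two_right]

theorem isUnit_two_pow_iff_odd_val {k : ℕ} (hk : k ≠ 0) (x : ZMod (2 ^ k)) :
    IsUnit x ↔ Odd x.val := by
  conv_lhs => rw [← natCast_zmod_val x]
  exact isUnit_natCast_two_pow_iff_odd hk x.val

theorem isUnit_add_two_pow_iff {k m : ℕ} (hk : k ≠ 0) (hm : m ≠ 0) (x : ZMod (2 ^ k)) :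
    IsUnit (x + 2 ^ m) ↔ IsUnit x := by
  have hx : x + 2 ^ m = ((x.val + 2 ^ m : ℕ) : ZMod (2 ^ k)) := by push_cast [natCast_zmod_val]; rfl
  rw [hx, isUnit_natCast_two_pow_iff_odd hk, isUnit_two_pow_iff_odd_val hk, Nat.odd_add]
  simp [Nat.even_pow, hm]

theorem two_pow_mul_of_isUnit {m : ℕ} {u : ZMod (2 ^ (m + 1))} (hu : IsUnit u) :
    2 ^ m * u = 2 ^ m := by
  obtain ⟨t, ht⟩ := (isUnit_two_pow_iff_odd_val m.succ_ne_zero u).mp hu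
  rw [← natCast_zmod_val u, ht]
  push_cast
  linear_combination (t : ZMod (2 ^ (m + 1))) * two_pow_self_eq_zero (m + 1)

theorem add_two_pow_sq_of_isUnit {m : ℕ} (hm : 2 ≤ m) {u : ZMod (2 ^ (m + 2))} (hu : IsUnit u) :
    (u + 2 ^ m) ^ 2 = u ^ 2 + 2 ^ (m + 1) := by
  have hsq : (2 : ZMod (2 ^ (m + 2))) ^ (m + m) = 0 :=
    pow_eq_zero_of_le (by omega) (two_pow_self_eq_zero _)
  linear_combination two_pow_mul_of_isUnit hu + hsq

abbrev reduceTwoPow (a : ℕ) : ZMod (2 ^ (a + 1)) →+* ZMod (2 ^ a) :=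
  castHom (pow_dvd_pow 2 a.le_succ) _

theorem isUnit_reduceTwoPow_iff {a : ℕ} (ha : a ≠ 0) (x : ZMod (2 ^ (a + 1))) :
    IsUnit (reduceTwoPow a x) ↔ IsUnit x := by
  conv_lhs => rw [← natCast_zmod_val x, map_natCast]
  rw [isUnit_natCast_two_pow_iff_odd ha, isUnit_two_pow_iff_odd_val a.succ_ne_zero]

theorem reduceTwoPow_eq_zero_iff {a : ℕ} (s : ZMod (2 ^ (a + 1))) :
    reduceTwoPow a s = 0 ↔ s = 0 ∨ s = 2 ^ a := by
  constructor
  · obtain ⟨z, rfl⟩ := intCast_surjective s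
    rw [map_intCast, intCast_zmod_eq_zero_iff_dvd]
    rintro ⟨w, rfl⟩
    obtain ⟨t, rfl | rfl⟩ := Int.even_or_odd' w
    · left
      push_cast
      linear_combination (t : ZMod (2 ^ (a + 1))) * two_pow_self_eq_zero (a + 1)
    · right
      push_cast
      linear_combination (t : ZMod (2 ^ (a + 1))) * two_pow_self_eq_zero (a + 1)
  · rintro (rfl | rfl)
    · exact map_zero _
    · rw [map_pow, map_ofNat, two_pow_self_eq_zero]

theorem reduceTwoPow_eq_reduceTwoPow_iff {a : ℕ} (s c : ZMod (2 ^ (a + 1))) :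
    reduceTwoPow a s = reduceTwoPow a c ↔ s = c ∨ s = c + 2 ^ a := by
  rw [← sub_eq_zero, ← map_sub, reduceTwoPow_eq_zero_iff, sub_eq_zero, sub_eq_iff_eq_add']

end ZMod

def unitSqReps {n : ℕ} (c : ZMod n) : Set (ZMod n × ZMod n) :=
  {uv | IsUnit (uv.1 * uv.2) ∧ uv.1 ^ 2 + uv.2 ^ 2 = c}

theorem rho_eq_card_unitSqReps (ν : ℤ) (q : ℕ) : rho ν q = Nat.card (unitSqReps (ν : ZMod q)) :=
  rfl

theorem disjoint_unitSqReps {n : ℕ} {c d : ZMod n} (h : c ≠ d) :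
    Disjoint (unitSqReps c) (unitSqReps d) :=
  Set.disjoint_left.mpr fun _ hc hd => h (hc.2.symm.trans hd.2)

open ZMod

theorem card_unitSqReps_add_two_pow {a : ℕ} (ha : 3 ≤ a) (c : ZMod (2 ^ (a + 1))) :
    Nat.card (unitSqReps (c + 2 ^ a)) = Nat.card (unitSqReps c) := by
  obtain ⟨m, rfl⟩ : ∃ m, a = m + 1 := ⟨a - 1, by omega⟩
  have hm : 2 ≤ m := by omega
  let e := (Equiv.addRight (2 ^ m : ZMod (2 ^ (m + 2)))).prodCongr (Equiv.refl (ZMod (2 ^ (m + 2))))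
  refine (Nat.card_congr (e.subtypeEquiv fun uv => ?_)).symm
  simp only [unitSqReps, Set.mem_ofPred_eq, e, Equiv.prodCongr_apply, Prod.map, Equiv.coe_addRight,
    Equiv.refl_apply, IsUnit.mul_iff, isUnit_add_two_pow_iff (by omega : m + 2 ≠ 0) (by omega : m ≠ 0)]
  constructor
  · rintro ⟨⟨hu, hv⟩, h⟩
    exact ⟨⟨hu, hv⟩, by rw [add_two_pow_sq_of_isUnit hm hu, ← h]; ring⟩
  · rintro ⟨⟨hu, hv⟩, h⟩
    exact ⟨⟨hu, hv⟩, by rw [add_two_pow_sq_of_isUnit hm hu] at h; linear_combination h⟩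

theorem preimage_reduceTwoPow_unitSqReps {a : ℕ} (ha : a ≠ 0) (c : ZMod (2 ^ (a + 1))) :
    Prod.map (reduceTwoPow a) (reduceTwoPow a) ⁻¹' unitSqReps (reduceTwoPow a c) =
      unitSqReps c ∪ unitSqReps (c + 2 ^ a) := by
  ext ⟨u, v⟩
  simp only [unitSqReps, Set.mem_preimage, Prod.map, Set.mem_union, Set.mem_ofPred_eq, ← map_mul,
    isUnit_reduceTwoPow_iff ha, ← map_pow, ← map_add, reduceTwoPow_eq_reduceTwoPow_iff, and_or_left]

theorem card_unitSqReps_eq_two_mul {a : ℕ} (ha : 3 ≤ a) (c : ZMod (2 ^ (a + 1))) :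
    Nat.card (unitSqReps c) = 2 * Nat.card (unitSqReps (reduceTwoPow a c)) := by
  classical
  let f := ((reduceTwoPow a).prodMap (reduceTwoPow a)).toAddMonoidHom
  have hf_apply : ⇑f = Prod.map (reduceTwoPow a) (reduceTwoPow a) := rfl
  have hπ : Surjective (reduceTwoPow a) := castHom_surjective _
  have hf : Surjective f := hπ.prodMap hπ
  have hker : Nat.card f.ker = 4 := by
    have h := f.card_eq_card_ker_mul_of_surjective hf
    simp only [Nat.card_prod, Nat.card_zmod, pow_succ] at h
    exact Nat.eq_of_mul_eq_mul_right (by positivity : 0 < 2 ^ a * 2 ^ a) (by rw [← h]; ring)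
  have hsplit := Nat.card_congr <| Equiv.Set.union <|
    disjoint_unitSqReps (c := c) (d := c + 2 ^ a) (by simpa using two_pow_ne_zero a)
  rw [Nat.card_sum, card_unitSqReps_add_two_pow ha, ← preimage_reduceTwoPow_unitSqReps (by omega),
    ← hf_apply, f.card_preimage_of_surjective hf, hker] at hsplit
  omega

theorem rho_two_pow {a : ℕ} (ha : 3 ≤ a) (ν : ℤ) : rho ν (2 ^ a) = 2 ^ (a - 3) * rho ν (2 ^ 3) := by
  induction a, ha using Nat.le_induction with
  | base => simp
  | succ n hn ih =>
    rw [rho_eq_card_unitSqReps, card_unitSqReps_eq_two_mul hn, map_intCast,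
      ← rho_eq_card_unitSqReps, ih, show n + 1 - 3 = n - 3 + 1 by omega, pow_succ]
    ring

theorem rho_two_pow_three (ν : ℤ) : rho ν (2 ^ 3) = if ν % 8 = 2 then 16 else 0 := by
  have hcount : ∀ c : ZMod (2 ^ 3), Nat.card {uv : ZMod (2 ^ 3) × ZMod (2 ^ 3) //
      IsUnit (uv.1 * uv.2) ∧ uv.1 ^ 2 + uv.2 ^ 2 = c} = if c = 2 then 16 else 0 := by
    intro c
    rw [Nat.card_eq_fintype_card]
    revert c
    decide
  have h2 : (ν : ZMod (2 ^ 3)) = 2 ↔ ν % 8 = 2 := by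
    have := intCast_eq_intCast_iff' ν 2 (2 ^ 3)
    norm_num at this
    exact_mod_cast this
  rw [rho, hcount]
  exact if_congr h2 rfl rfl

theorem stmt4 (a : ℕ) (ha : 3 ≤ a) (ν : ℤ) :
    rho ν (2 ^ a) = (if ν % 8 = 2 then 2 ^ (a + 1) else 0) := by
  rw [rho_two_pow ha, rho_two_pow_three]
  split_ifs
  · rw [show a + 1 = a - 3 + 4 by omega, pow_add]
    norm_num
  · rfl
end

section
/- Let g ≥ 2 be an integer such that every prime p dividing g satisfies p ≡ 1 (mod 4), and let ω(g) be the number of distinct prime factors of g. Then ρ(0;g) = 2^{ω(g)} φ(g), and equivalently 𝔖(0,g) = (g/(g−1))·(1 − 2^{ω(g)}/φ(g)). -/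
/-- The local factor 𝔖(b,g) = (g/(g−1))·(1 − ρ(b;g)/φ(g)²). -/
noncomputable def Sfactor (b : ℤ) (g : ℕ) : ℝ :=
  ((g : ℝ) / ((g : ℝ) - 1)) * (1 - (rho b g : ℝ) / (Nat.totient g : ℝ) ^ 2)

/-- Hensel lifting: existence of sqrt(-1) modulo p^k in ℤ. -/
lemma exists_int_sqrt_neg_one (p : ℕ) (hp : p.Prime) (h4 : p % 4 = 1) :
    ∀ k : ℕ, 1 ≤ k → ∃ x : ℤ, (p : ℤ) ^ k ∣ x ^ 2 + 1 := by
  haveI : Fact p.Prime := ⟨hp⟩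
  intro k hk
  induction k with
  | zero => omega
  | succ k ih =>
    rcases Nat.eq_zero_or_pos k with hk0 | hk1
    · subst hk0
      have hsq : IsSquare (-1 : ZMod p) := by
        rw [ZMod.exists_sq_eq_neg_one_iff]; omega
      obtain ⟨y, hy⟩ := hsq
      refine ⟨(y.val : ℤ), ?_⟩
      rw [pow_one, ← ZMod.intCast_zmod_eq_zero_iff_dvd]
      push_cast
      rw [ZMod.natCast_val, ZMod.cast_id]
      rw [sq, ← hy]
      ring
    · obtain ⟨x, c, hc⟩ := ih hk1
      -- x is a unit mod p
      have hux : IsUnit (x : ZMod p) := by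
        rw [isUnit_iff_ne_zero, Ne, ZMod.intCast_zmod_eq_zero_iff_dvd]
        intro hdvd
        have h1 : (p:ℤ) ∣ x ^ 2 + 1 := dvd_trans (dvd_pow_self _ hk1.ne') ⟨c, hc⟩
        have h2 : (p:ℤ) ∣ x ^ 2 := by rw [sq]; exact hdvd.mul_right x
        have h3 : (p:ℤ) ∣ 1 := by simpa using dvd_sub h1 h2
        have := Int.le_of_dvd one_pos h3
        have := hp.two_le
        omega
      have hu2 : IsUnit (2 : ZMod p) := by
        rw [isUnit_iff_ne_zero, Ne, show (2 : ZMod p) = ((2:ℕ) : ZMod p) by norm_num,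
          ZMod.natCast_eq_zero_iff]
        intro hdvd
        have := Nat.le_of_dvd (by norm_num) hdvd
        have := hp.two_le
        omega
      have hu : IsUnit (2 * (x : ZMod p)) := hu2.mul hux
      -- choose t with c + 2 x t ≡ 0 mod p
      set t : ℤ := (((2 * (x : ZMod p))⁻¹ * (-(c : ZMod p))).val : ℤ)
      have ht : (p : ℤ) ∣ c + 2 * x * t := by
        rw [← ZMod.intCast_zmod_eq_zero_iff_dvd]
        push_cast [t]
        rw [ZMod.natCast_val, ZMod.cast_id, ← mul_assoc, ZMod.mul_inv_of_unit _ hu]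
        ring
      obtain ⟨d, hd⟩ := ht
      refine ⟨x + t * (p:ℤ) ^ k, ?_⟩
      have key : (x + t * (p:ℤ) ^ k) ^ 2 + 1
          = (p:ℤ) ^ k * (c + 2 * x * t) + t ^ 2 * ((p:ℤ) ^ k * (p:ℤ) ^ k) := by
        have : x ^ 2 + 1 = (p:ℤ)^k * c := hc
        nlinarith [this]
      rw [key, hd, pow_succ]
      refine dvd_add ⟨d, by ring⟩ ?_
      have hkk : (p:ℤ) ^ (k + 1) ∣ (p:ℤ)^k * (p:ℤ)^k := by
        rw [← pow_add]
        exact pow_dvd_pow _ (by omega)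
      exact Dvd.dvd.mul_left hkk _

/-- In ZMod (p^k), zero divisors summing to a unit force one factor zero. -/
lemma zmod_prime_pow_cancel (p : ℕ) (hp : p.Prime) (k : ℕ) (hk : 1 ≤ k)
    (a b : ZMod (p ^ k)) (hab : a * b = 0) (hu : IsUnit (a + b)) : a = 0 ∨ b = 0 := by
  haveI : NeZero (p ^ k) := ⟨pow_ne_zero _ hp.pos.ne'⟩
  have hunit : ∀ x : ZMod (p ^ k), ¬ IsUnit x → p ∣ x.val := by
    intro x hx
    by_contra hdvd
    apply hx
    have : IsUnit ((x.val : ℕ) : ZMod (p ^ k)) := by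
      rw [ZMod.isUnit_iff_coprime]
      exact Nat.Coprime.pow_right _ ((hp.coprime_iff_not_dvd.mpr hdvd).symm)
    rwa [ZMod.natCast_rightInverse x] at this
  by_cases ha : IsUnit a
  · right; exact (ha.mul_right_eq_zero).mp hab
  by_cases hb : IsUnit b
  · left; exact (hb.mul_left_eq_zero).mp hab
  exfalso
  have hpa := hunit a ha
  have hpb := hunit b hb
  have hsum : p ∣ (a + b).val := by
    rw [ZMod.val_add]
    exact Nat.dvd_mod_iff (dvd_pow_self p (by omega : k ≠ 0)) |>.mpr (Nat.dvd_add hpa hpb)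
  have : IsUnit (((a+b).val : ℕ) : ZMod (p ^ k)) := by
    rwa [ZMod.natCast_rightInverse (a+b)]
  rw [ZMod.isUnit_iff_coprime] at this
  have hg : p ∣ Nat.gcd ((a+b).val) (p ^ k) :=
    Nat.dvd_gcd hsum (dvd_pow_self p (by omega : k ≠ 0))
  rw [Nat.Coprime] at this
  rw [this] at hg
  have := Nat.le_of_dvd one_pos hg
  have := hp.two_le
  omega

/-- Exactly two square roots of -1 in ZMod (p^k). -/
lemma card_sqrt_neg_one_prime_pow (p : ℕ) (hp : p.Prime) (h4 : p % 4 = 1) (k : ℕ) (hk : 1 ≤ k) :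
    Nat.card {x : ZMod (p ^ k) // x ^ 2 = -1} = 2 := by
  haveI : NeZero (p ^ k) := ⟨pow_ne_zero _ hp.pos.ne'⟩
  haveI : Fact (1 < p ^ k) := ⟨by
    calc 1 < p := by have := hp.two_le; omega
    _ ≤ p ^ k := Nat.le_self_pow (by omega) p⟩
  obtain ⟨x, hx⟩ := exists_int_sqrt_neg_one p hp h4 k hk
  set x₀ : ZMod (p ^ k) := (x : ZMod (p ^ k)) with hx₀
  have hx0 : x₀ ^ 2 = -1 := by
    have : ((x ^ 2 + 1 : ℤ) : ZMod (p ^ k)) = 0 := by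
      rw [ZMod.intCast_zmod_eq_zero_iff_dvd]
      exact_mod_cast hx
    push_cast at this
    linear_combination this
  have hu2 : IsUnit (2 : ZMod (p ^ k)) := by
    rw [show (2 : ZMod (p^k)) = ((2:ℕ) : ZMod (p^k)) by norm_num, ZMod.isUnit_iff_coprime]
    exact Nat.Coprime.pow_right _ ((Nat.coprime_primes Nat.prime_two hp).mpr (by omega))
  have huniq : ∀ y : ZMod (p ^ k), y ^ 2 = -1 → y = x₀ ∨ y = -x₀ := by
    intro y hy
    have huy : IsUnit y := IsUnit.of_mul_eq_one (-y) (by linear_combination -hy)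
    have hprod : (y - x₀) * (y + x₀) = 0 := by linear_combination hy - hx0
    have hsum : IsUnit ((y - x₀) + (y + x₀)) := by
      have : (y - x₀) + (y + x₀) = 2 * y := by ring
      rw [this]
      exact hu2.mul huy
    rcases zmod_prime_pow_cancel p hp k hk _ _ hprod hsum with h1 | h1
    · left; linear_combination h1
    · right; linear_combination h1
  have hne : x₀ ≠ -x₀ := by
    intro he
    have h2 : (2 : ZMod (p^k)) * x₀ = 0 := by linear_combination he
    have hux : IsUnit x₀ := IsUnit.of_mul_eq_one (-x₀) (by linear_combination -hx0)
    have := (hu2.mul hux).ne_zero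
    exact this h2
  have hset : {y : ZMod (p ^ k) | y ^ 2 = -1} = {x₀, -x₀} := by
    ext y
    constructor
    · intro hy
      exact huniq y hy
    · rintro (rfl | rfl)
      · exact hx0
      · show (-x₀) ^ 2 = -1
        linear_combination hx0
  calc Nat.card {x : ZMod (p ^ k) // x ^ 2 = -1}
      = Set.ncard {y : ZMod (p ^ k) | y ^ 2 = -1} := Nat.card_coe_set_eq _
    _ = 2 := by rw [hset]; exact Set.ncard_pair hne

lemma card_sqrt_neg_one_mul (a b : ℕ) (hab : a.Coprime b) :
    Nat.card {x : ZMod (a * b) // x ^ 2 = -1}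
      = Nat.card {x : ZMod a // x ^ 2 = -1} * Nat.card {x : ZMod b // x ^ 2 = -1} := by
  let e := ZMod.chineseRemainder hab
  have key : ∀ x : ZMod (a * b), x ^ 2 = -1 ↔ ((e x).1 ^ 2 = -1 ∧ (e x).2 ^ 2 = -1) := by
    intro x
    constructor
    · intro hx
      have : e (x ^ 2) = e (-1) := by rw [hx]
      rw [map_pow, map_neg, map_one] at this
      have h1 : ((e x) ^ 2).1 = (-1 : ZMod a × ZMod b).1 := by rw [this]
      have h2 : ((e x) ^ 2).2 = (-1 : ZMod a × ZMod b).2 := by rw [this]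
      exact ⟨h1, h2⟩
    · rintro ⟨h1, h2⟩
      apply e.injective
      rw [map_pow, map_neg, map_one]
      exact Prod.ext h1 h2
  have equiv1 : {x : ZMod (a * b) // x ^ 2 = -1}
      ≃ {y : ZMod a × ZMod b // y.1 ^ 2 = -1 ∧ y.2 ^ 2 = -1} :=
    e.toEquiv.subtypeEquiv key
  have equiv2 : {y : ZMod a × ZMod b // y.1 ^ 2 = -1 ∧ y.2 ^ 2 = -1}
      ≃ {x : ZMod a // x ^ 2 = -1} × {x : ZMod b // x ^ 2 = -1} :=
    Equiv.subtypeProdEquivProd (p := fun x : ZMod a => x ^ 2 = -1) (q := fun x : ZMod b => x ^ 2 = -1)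
  rw [Nat.card_congr (equiv1.trans equiv2), Nat.card_prod]

lemma card_sqrt_neg_one_eq (g : ℕ) (hg : 2 ≤ g)
    (h : ∀ p : ℕ, p.Prime → p ∣ g → p % 4 = 1) :
    Nat.card {x : ZMod g // x ^ 2 = -1} = 2 ^ g.primeFactors.card := by
  induction g using Nat.recOnPosPrimePosCoprime with
  | prime_pow p n hp hn =>
    have h4 : p % 4 = 1 := h p hp (dvd_pow_self p (by omega))
    rw [card_sqrt_neg_one_prime_pow p hp h4 n hn,
      Nat.primeFactors_prime_pow (by omega) hp, Finset.card_singleton, pow_one]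
  | zero => omega
  | one => omega
  | coprime a b ha hb hab iha ihb =>
    rw [card_sqrt_neg_one_mul a b hab,
      iha (by omega) (fun p pp hd => h p pp (hd.mul_right b)),
      ihb (by omega) (fun p pp hd => h p pp (hd.mul_left a)),
      Nat.Coprime.primeFactors_mul hab,
      Finset.card_union_of_disjoint (Nat.Coprime.disjoint_primeFactors hab), pow_add]

lemma rho_zero_eq (g : ℕ) [NeZero g] :
    rho 0 g = Nat.card {x : ZMod g // x ^ 2 = -1} * g.totient := by
  have e : {uv : ZMod g × ZMod g // IsUnit (uv.1 * uv.2) ∧ uv.1 ^ 2 + uv.2 ^ 2 = ((0:ℤ) : ZMod g)}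
      ≃ {i : ZMod g // i ^ 2 = -1} × {v : ZMod g // IsUnit v} := by
    refine ⟨fun s => ⟨⟨s.1.1 * (s.1.2)⁻¹, ?_⟩, ⟨s.1.2, ?_⟩⟩,
      fun iv => ⟨(iv.1.1 * iv.2.1, iv.2.1), ?_, ?_⟩, ?_, ?_⟩
    · obtain ⟨⟨u, v⟩, h1, h2⟩ := s
      simp only at h2 ⊢
      have hv : IsUnit v := isUnit_of_mul_isUnit_right h1
      have hvv : v * v⁻¹ = 1 := ZMod.mul_inv_of_unit v hv
      have h2' : u ^ 2 = -(v ^ 2) := by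
        rw [Int.cast_zero] at h2
        linear_combination h2
      calc (u * v⁻¹) ^ 2 = u ^ 2 * (v⁻¹) ^ 2 := mul_pow u v⁻¹ 2
        _ = -(v ^ 2) * (v⁻¹) ^ 2 := by rw [h2']
        _ = -((v * v⁻¹) ^ 2) := by ring
        _ = -1 := by rw [hvv]; ring
    · exact isUnit_of_mul_isUnit_right s.2.1
    · obtain ⟨⟨i, hi⟩, ⟨v, hv⟩⟩ := iv
      simp only
      have hiu : IsUnit i := IsUnit.of_mul_eq_one (-i) (by linear_combination -hi)
      exact (hiu.mul hv).mul hv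
    · obtain ⟨⟨i, hi⟩, ⟨v, hv⟩⟩ := iv
      simp only
      rw [Int.cast_zero]
      linear_combination v ^ 2 * hi
    · rintro ⟨⟨u, v⟩, h1, h2⟩
      have hv : IsUnit v := isUnit_of_mul_isUnit_right h1
      apply Subtype.ext
      simp only
      have : u * v⁻¹ * v = u := by
        rw [mul_assoc, ZMod.inv_mul_of_unit v hv, mul_one]
      rw [this]
    · rintro ⟨⟨i, hi⟩, ⟨v, hv⟩⟩
      have : i * v * v⁻¹ = i := by
        rw [mul_assoc, ZMod.mul_inv_of_unit v hv, mul_one]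
      simp only [this]
  have eu : {v : ZMod g // IsUnit v} ≃ (ZMod g)ˣ :=
    ⟨fun v => v.2.unit, fun u => ⟨u, u.isUnit⟩,
      fun v => Subtype.ext v.2.unit_spec, fun u => Units.ext u.isUnit.unit_spec⟩
  rw [rho, Nat.card_congr e, Nat.card_prod, Nat.card_congr eu]
  congr 1
  rw [Nat.card_eq_fintype_card, ZMod.card_units_eq_totient]

theorem stmt7 (g : ℕ) (hg : 3 ≤ g) (h : ∀ p : ℕ, p.Prime → p ∣ g → p % 4 = 1) :
    rho 0 g = 2 ^ g.primeFactors.card * g.totient ∧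
    Sfactor 0 g =
      ((g : ℝ) / ((g : ℝ) - 1)) *
        (1 - (2 : ℝ) ^ g.primeFactors.card / (Nat.totient g : ℝ)) := by
  haveI : NeZero g := ⟨by omega⟩
  have h1 : rho 0 g = 2 ^ g.primeFactors.card * g.totient := by
    rw [rho_zero_eq g, card_sqrt_neg_one_eq g (by omega) h]
  refine ⟨h1, ?_⟩
  have hφ : (g.totient : ℝ) ≠ 0 := by
    exact_mod_cast (Nat.totient_pos.mpr (by omega)).ne'
  rw [Sfactor, h1]
  congr 1
  push_cast
  rw [pow_two]
  congr 1
  field_simp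
end
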